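/- For every x ∈ Σ_A^*, the characteristic function χ_{[x]} of the cylinder set [x] is a finite (complex) linear combination of elements of the Haar family 𝓗. -/

import Mathlib

open MeasureTheory Filter
open scoped ENNReal NNReal

namespace SFT

variable {l : ℕ}

/-- The one-sided subshift of finite type determined by the `l × l` matrix `A`:
infinite sequences with transitions allowed by `A`. -/
abbrev SigmaA (l : ℕ) (A : Matrix (Fin l) (Fin l) ℕ) : Type :=
  {ω : ℕ → Fin l // ∀ k, A (ω k) (ω (k + 1)) = 1}

/-- The left shift `σ` on `SigmaA l A`. -/
def shift {A : Matrix (Fin l) (Fin l) ℕ} (ω : SigmaA l A) : SigmaA l A :=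
  ⟨fun n => ω.1 (n + 1), fun k => ω.2 (k + 1)⟩

/-- Birkhoff sums `S_k φ = ∑_{m<k} φ ∘ σ^m`. -/
def birkhoff {A : Matrix (Fin l) (Fin l) ℕ} (φ : SigmaA l A → ℝ) (k : ℕ) (ω : SigmaA l A) : ℝ :=
  ∑ m ∈ Finset.range k, φ (shift^[m] ω)

/-- The matrix `A` has `0`-`1` entries and is irreducible and aperiodic
(some power of `A` has all entries strictly positive). -/
def Primitive (A : Matrix (Fin l) (Fin l) ℕ) : Prop :=
  (∀ i j, A i j = 0 ∨ A i j = 1) ∧ ∃ n : ℕ, 0 < n ∧ ∀ i j, 0 < (A ^ n) i j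

/-- A finite word is admissible, i.e. belongs to `Σ_A^*`. -/
def Admissible (A : Matrix (Fin l) (Fin l) ℕ) (x : List (Fin l)) : Prop :=
  x ≠ [] ∧ ∀ (i : ℕ) (h : i + 1 < x.length), A (x[i]'(by omega)) (x[i + 1]'h) = 1

/-- The cylinder set `[x]` of a finite word (the empty word gives all of `Σ_A`). -/
def cylinder (A : Matrix (Fin l) (Fin l) ℕ) (x : List (Fin l)) : Set (SigmaA l A) :=
  {ω | ∀ (i : ℕ) (h : i < x.length), ω.1 i = x[i]'h}

/-- The initial word `(ω_1, …, ω_k)` of `ω`. -/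
def wordPrefix {A : Matrix (Fin l) (Fin l) ℕ} (ω : SigmaA l A) (k : ℕ) : List (Fin l) :=
  List.ofFn (fun i : Fin k => ω.1 i)

/-- `μ` is a Gibbs measure for the potential `φ` with pressure `P`:
`c⁻¹ ≤ μ([ω_1,…,ω_k]) / exp(S_kφ(ω) − kP) ≤ c` for some `c > 1`. -/
def IsGibbs {A : Matrix (Fin l) (Fin l) ℕ} (φ : SigmaA l A → ℝ) (P : ℝ)
    (μ : Measure (SigmaA l A)) : Prop :=
  ∃ c : ℝ, 1 < c ∧ ∀ (ω : SigmaA l A) (k : ℕ), 0 < k →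
    c⁻¹ ≤ (μ (cylinder A (wordPrefix ω k))).toReal / Real.exp (birkhoff φ k ω - k * P) ∧
      (μ (cylinder A (wordPrefix ω k))).toReal / Real.exp (birkhoff φ k ω - k * P) ≤ c

/-- `φ` is Hölder continuous with respect to the metric `d(ω,υ) = 2^{-(ω ∧ υ)}`:
there are `C` and an exponent `s > 0` with `|φ(ω) − φ(υ)| ≤ C ⬝ d(ω,υ)^s`, i.e.
`|φ(ω) − φ(υ)| ≤ C ⬝ 2^{-sn}` whenever `ω` and `υ` agree in their first `n` coordinates. -/
def HolderCont {A : Matrix (Fin l) (Fin l) ℕ} (φ : SigmaA l A → ℝ) : Prop :=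
  ∃ C s : ℝ, 0 < s ∧ ∀ (ω υ : SigmaA l A) (n : ℕ),
    (∀ i < n, ω.1 i = υ.1 i) → |φ ω - φ υ| ≤ C * (2 : ℝ) ^ (-(s * n))

lemma measurableSet_cylinder (A : Matrix (Fin l) (Fin l) ℕ) (x : List (Fin l)) :
    MeasurableSet (cylinder A x) := by
  have h : cylinder A x = ⋂ i : Fin x.length,
      (fun ω : SigmaA l A => ω.1 i.1) ⁻¹' {x[i.1]'i.2} := by
    ext ω
    simp only [cylinder, Set.mem_setOf_eq, Set.mem_iInter, Set.mem_preimage,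
      Set.mem_singleton_iff]
    exact ⟨fun h i => h i.1 i.2, fun h i hi => h ⟨i, hi⟩⟩
  rw [h]
  exact MeasurableSet.iInter fun i =>
    ((measurable_pi_apply i.1).comp measurable_subtype_coe) (measurableSet_singleton _)

/-- `α(x)`: the number of children of the word `x` (the row sum of `A` at the
last letter of `x`). -/
def alpha (A : Matrix (Fin l) (Fin l) ℕ) (x : List (Fin l)) : ℕ :=
  match x.getLast? with
  | some a => ∑ i, A a i
  | none => 0

/-- The `m`-th child `x θ_x⁻¹(m)` of the word `x`, the ordering of the children
being given by `θinv x`. -/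
def child (θinv : List (Fin l) → ℕ → Fin l) (x : List (Fin l)) (m : ℕ) : List (Fin l) :=
  x ++ [θinv x m]

/-- The characteristic function of the cylinder `[x]`, as an element of `L²(μ)`. -/
noncomputable def cylLp (A : Matrix (Fin l) (Fin l) ℕ) (μ : Measure (SigmaA l A))
    [IsFiniteMeasure μ] (x : List (Fin l)) : Lp ℂ 2 μ :=
  indicatorConstLp 2 (measurableSet_cylinder A x) (measure_ne_top μ _) (1 : ℂ)

/-- The Haar function `e_{x,j} = ∑_m μ([xθ_x⁻¹(m)])^{-1/2} ⟨f_{x,m}, U_x f_{x,j}⟩_x χ_{[xθ_x⁻¹(m)]}`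
as an element of `L²(μ)`; here `u x m j = ⟨f_{x,m}, U_x f_{x,j}⟩_x` are the matrix
coefficients of `U_x` in the orthonormal basis `(f_{x,m})_m`. -/
noncomputable def haarLp (A : Matrix (Fin l) (Fin l) ℕ) (μ : Measure (SigmaA l A))
    [IsFiniteMeasure μ] (θinv : List (Fin l) → ℕ → Fin l) (u : List (Fin l) → ℕ → ℕ → ℝ)
    (x : List (Fin l)) (j : ℕ) : Lp ℂ 2 μ :=
  ∑ m ∈ Finset.range (alpha A x),
    ((((Real.sqrt ((μ (cylinder A (child θinv x m))).toReal))⁻¹ * u x m j : ℝ) : ℂ)) •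
      cylLp A μ (child θinv x m)

/-- The Haar family `𝓗`: the functions `e_{x,j}` for admissible `x` and
`1 ≤ j ≤ α(x) − 1` (here indexed by `0 ≤ j < α(x) − 1`), together with the
normalised characteristic functions `μ([a])^{-1/2} χ_{[a]}` of the length-one cylinders. -/
noncomputable def haarSet (A : Matrix (Fin l) (Fin l) ℕ) (μ : Measure (SigmaA l A))
    [IsFiniteMeasure μ] (θinv : List (Fin l) → ℕ → Fin l) (u : List (Fin l) → ℕ → ℕ → ℝ) :
    Set (Lp ℂ 2 μ) :=
  {f | ∃ x j, Admissible A x ∧ j + 1 < alpha A x ∧ f = haarLp A μ θinv u x j} ∪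
    {f | ∃ a : Fin l,
      f = (((Real.sqrt ((μ (cylinder A [a])).toReal))⁻¹ : ℝ) : ℂ) • cylLp A μ [a]}

/-!
The children `[x b]` of an admissible word `x` partition `[x]`, so the Haar function
`e_{x,α(x)}` built from the last column of `U_x` is `μ([x])^{-1/2} χ_{[x]}`. The coefficient
matrix `(u x m j)_{m,j}` is orthogonal, hence its rows are orthonormal as well, and inverting it
writes `μ([x b])^{-1/2} χ_{[x b]}` as a combination of `e_{x,1}, …, e_{x,α(x)}`. Induction on the
length of the word then reduces everything to the normalised length-one cylinders. A cylinder of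
measure zero is `0` in `L²(μ)`, so the normalising factors `μ([w])^{-1/2}` never need inverting
where they vanish.
-/

section IndicatorConstLp

variable {α E : Type*} [MeasurableSpace α] {μ : Measure α} {p : ℝ≥0∞} [NormedAddCommGroup E]

theorem indicatorConstLp_of_measure_zero {s : Set α} {hs : MeasurableSet s} {hμs : μ s ≠ ∞}
    (hs0 : μ s = 0) (c : E) : indicatorConstLp p hs hμs c = 0 := by
  rw [Lp.eq_zero_iff_ae_eq_zero]
  filter_upwards [indicatorConstLp_coeFn (p := p) (hs := hs) (hμs := hμs) (c := c),
    measure_eq_zero_iff_ae_notMem.1 hs0] with a ha has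
  rw [ha, Set.indicator_of_notMem has, Pi.zero_apply]

theorem indicatorConstLp_eq_sum_of_eq_biUnion {ι : Type*} {s : Set α} {hs : MeasurableSet s}
    {hμs : μ s ≠ ∞} {S : Finset ι} {t : ι → Set α} {ht : ∀ i, MeasurableSet (t i)}
    {hμt : ∀ i, μ (t i) ≠ ∞} (hst : s = ⋃ i ∈ S, t i) (hdisj : (S : Set ι).PairwiseDisjoint t)
    (c : E) : indicatorConstLp p hs hμs c = ∑ i ∈ S, indicatorConstLp p (ht i) (hμt i) c := by
  classical
  induction S using Finset.induction_on generalizing s with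
  | empty =>
    simp only [Finset.notMem_empty, Set.iUnion_of_empty, Set.iUnion_empty] at hst
    subst hst
    simp
  | insert i S hi ih =>
    rw [Finset.set_biUnion_insert] at hst
    subst hst
    rw [Finset.coe_insert, Set.pairwiseDisjoint_insert] at hdisj
    have hdisj_i : Disjoint (t i) (⋃ j ∈ S, t j) :=
      Set.disjoint_iUnion₂_right.2 fun j hj => hdisj.2 j hj fun hij => hi (hij ▸ hj)
    rw [Finset.sum_insert hi, indicatorConstLp_disjoint_union (ht i)
      (S.measurableSet_biUnion fun j _ => ht j) (hμt i)
      (measure_biUnion_lt_top S.finite_toSet fun j _ => (hμt j).lt_top).ne hdisj_i,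
      ih rfl hdisj.1]

end IndicatorConstLp

section OrthonormalColumns

variable {K : Type*} [CommRing K] {n : ℕ} {u : ℕ → ℕ → K}

theorem sum_mul_eq_ite_of_orthonormal_columns
    (hu : ∀ j < n, ∀ j' < n, ∑ m ∈ Finset.range n, u m j * u m j' = if j = j' then 1 else 0)
    {m m' : ℕ} (hm : m < n) (hm' : m' < n) :
    ∑ j ∈ Finset.range n, u m j * u m' j = if m = m' then 1 else 0 := by
  let M : Matrix (Fin n) (Fin n) K := Matrix.of fun i j => u i j
  have hMM : M.transpose * M = 1 := by
    ext j j'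
    simp only [Matrix.mul_apply, Matrix.transpose_apply, Matrix.of_apply, M]
    rw [Fin.sum_univ_eq_sum_range (fun i => u i j * u i j'), hu j j.2 j' j'.2]
    simp [Matrix.one_apply, Fin.ext_iff]
  have hMM' : M * M.transpose = 1 := mul_eq_one_comm.mp hMM
  have h := congrFun₂ hMM' ⟨m, hm⟩ ⟨m', hm'⟩
  simp only [Matrix.mul_apply, Matrix.transpose_apply, Matrix.of_apply, M] at h
  rw [Fin.sum_univ_eq_sum_range (fun j => u m j * u m' j)] at h
  simp [h, Matrix.one_apply]

theorem sum_smul_sum_smul_of_orthonormal_columns {M : Type*} [AddCommGroup M] [Module K M]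
    (hu : ∀ j < n, ∀ j' < n, ∑ m ∈ Finset.range n, u m j * u m j' = if j = j' then 1 else 0)
    (v : ℕ → M) {m : ℕ} (hm : m < n) :
    ∑ j ∈ Finset.range n, u m j • ∑ m' ∈ Finset.range n, u m' j • v m' = v m := by
  simp_rw [Finset.smul_sum, smul_smul]
  rw [Finset.sum_comm]
  simp_rw [← Finset.sum_smul]
  rw [Finset.sum_congr rfl fun m' hm' => by
    rw [sum_mul_eq_ite_of_orthonormal_columns hu hm (Finset.mem_range.1 hm'), ite_smul,
      one_smul, zero_smul]]
  simp [Finset.mem_range.2 hm]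

end OrthonormalColumns

section Words

variable {A : Matrix (Fin l) (Fin l) ℕ}

theorem admissible_iff {x : List (Fin l)} :
    Admissible A x ↔ x ≠ [] ∧ x.IsChain (fun a b => A a b = 1) := by
  rw [Admissible, List.isChain_iff_getElem]

theorem Admissible.of_append_singleton {y : List (Fin l)} {b : Fin l} (hy : y ≠ [])
    (h : Admissible A (y ++ [b])) : Admissible A y ∧ A (y.getLast hy) b = 1 := by
  rw [admissible_iff, List.isChain_append] at h
  simpa [admissible_iff, hy, List.getLast?_eq_some_getLast hy] using h.2

theorem mem_cylinder_append_singleton {x : List (Fin l)} {b : Fin l} {ω : SigmaA l A} :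
    ω ∈ cylinder A (x ++ [b]) ↔ ω ∈ cylinder A x ∧ ω.1 x.length = b := by
  refine ⟨fun h => ⟨fun i hi => ?_, ?_⟩, fun ⟨h1, h2⟩ i hi => ?_⟩
  · rw [h i (by simp; omega), List.getElem_append_left hi]
  · rw [h x.length (by simp), List.getElem_concat_length rfl]
  · rcases Nat.lt_or_ge i x.length with hlt | hge
    · rw [List.getElem_append_left hlt, h1 i hlt]
    · obtain rfl : i = x.length := by simp at hi; omega
      rw [List.getElem_concat_length rfl, h2]

theorem adj_getLast_of_mem_cylinder {x : List (Fin l)} (hx : x ≠ []) {ω : SigmaA l A}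
    (hω : ω ∈ cylinder A x) : A (x.getLast hx) (ω.1 x.length) = 1 := by
  have hlen : x.length - 1 + 1 = x.length := Nat.sub_add_cancel (List.length_pos_iff.2 hx)
  have := ω.2 (x.length - 1)
  rwa [hlen, hω _ (by omega), ← List.getLast_eq_getElem] at this

end Words

section Haar

variable {A : Matrix (Fin l) (Fin l) ℕ} {μ : Measure (SigmaA l A)} [IsFiniteMeasure μ]
  {θinv : List (Fin l) → ℕ → Fin l} {x : List (Fin l)}

theorem cylinder_eq_biUnion_child (hx : x ≠ [])
    (hθ : Set.SurjOn (θinv x) (Set.Iio (alpha A x)) {y : Fin l | A (x.getLast hx) y = 1}) :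
    cylinder A x = ⋃ m ∈ Finset.range (alpha A x), cylinder A (child θinv x m) := by
  ext ω
  simp only [Set.mem_iUnion, Finset.mem_range, child, mem_cylinder_append_singleton]
  refine ⟨fun hω => ?_, fun ⟨m, _, hω, _⟩ => hω⟩
  obtain ⟨m, hm, hθm⟩ := hθ (adj_getLast_of_mem_cylinder hx hω)
  exact ⟨m, hm, hω, hθm.symm⟩

theorem pairwiseDisjoint_cylinder_child (hθ : Set.InjOn (θinv x) (Set.Iio (alpha A x))) :
    (Finset.range (alpha A x) : Set ℕ).PairwiseDisjoint fun m => cylinder A (child θinv x m) := by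
  intro m hm m' hm' hne
  refine Set.disjoint_left.2 fun ω hω hω' => hne (hθ (by simpa using hm) (by simpa using hm') ?_)
  simp only [child, mem_cylinder_append_singleton] at hω hω'
  rw [← hω.2, ← hω'.2]

theorem cylLp_eq_sum_cylLp_child (hx : x ≠ [])
    (hθ : Set.BijOn (θinv x) (Set.Iio (alpha A x)) {y : Fin l | A (x.getLast hx) y = 1}) :
    cylLp A μ x = ∑ m ∈ Finset.range (alpha A x), cylLp A μ (child θinv x m) :=
  indicatorConstLp_eq_sum_of_eq_biUnion (cylinder_eq_biUnion_child hx hθ.surjOn)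
    (pairwiseDisjoint_cylinder_child hθ.injOn) _

theorem smul_cylLp_congr {a b : ℂ} (h : μ (cylinder A x) ≠ 0 → a = b) :
    a • cylLp A μ x = b • cylLp A μ x := by
  by_cases h0 : μ (cylinder A x) = 0
  · rw [cylLp, indicatorConstLp_of_measure_zero h0, smul_zero, smul_zero]
  · rw [h h0]

theorem sqrt_measure_cylinder_ne_zero (h0 : μ (cylinder A x) ≠ 0) :
    Real.sqrt (μ (cylinder A x)).toReal ≠ 0 :=
  (Real.sqrt_pos.2 (ENNReal.toReal_pos h0 (measure_ne_top μ _))).ne'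

theorem cylLp_mem_of_inv_sqrt_smul_mem {S : Submodule ℂ (Lp ℂ 2 μ)}
    (h : (((Real.sqrt (μ (cylinder A x)).toReal)⁻¹ : ℝ) : ℂ) • cylLp A μ x ∈ S) :
    cylLp A μ x ∈ S := by
  have hx : cylLp A μ x = ((Real.sqrt (μ (cylinder A x)).toReal : ℝ) : ℂ) •
      (((Real.sqrt (μ (cylinder A x)).toReal)⁻¹ : ℝ) : ℂ) • cylLp A μ x := by
    rw [smul_smul, ← one_smul ℂ (cylLp A μ x), smul_smul, mul_one]
    refine smul_cylLp_congr fun h0 => ?_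
    rw [← Complex.ofReal_mul, mul_inv_cancel₀ (sqrt_measure_cylinder_ne_zero h0),
      Complex.ofReal_one]
  rw [hx]
  exact S.smul_mem _ h

variable {u : List (Fin l) → ℕ → ℕ → ℝ}

theorem haarLp_last_eq (hx : x ≠ [])
    (hθ : Set.BijOn (θinv x) (Set.Iio (alpha A x)) {y : Fin l | A (x.getLast hx) y = 1})
    (hu_last : ∀ m < alpha A x, u x m (alpha A x - 1) =
      (Real.sqrt ((μ (cylinder A x)).toReal))⁻¹ *
        Real.sqrt ((μ (cylinder A (child θinv x m))).toReal)) :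
    haarLp A μ θinv u x (alpha A x - 1) =
      (((Real.sqrt ((μ (cylinder A x)).toReal))⁻¹ : ℝ) : ℂ) • cylLp A μ x := by
  rw [cylLp_eq_sum_cylLp_child hx hθ, Finset.smul_sum, haarLp]
  refine Finset.sum_congr rfl fun m hm => smul_cylLp_congr fun h0 => ?_
  rw [hu_last m (Finset.mem_range.1 hm), mul_left_comm,
    inv_mul_cancel₀ (sqrt_measure_cylinder_ne_zero h0), mul_one]

theorem sum_smul_haarLp
    (hu : ∀ j < alpha A x, ∀ j' < alpha A x,
      ∑ m ∈ Finset.range (alpha A x), u x m j * u x m j' = if j = j' then 1 else 0)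
    {m : ℕ} (hm : m < alpha A x) :
    ∑ j ∈ Finset.range (alpha A x), ((u x m j : ℝ) : ℂ) • haarLp A μ θinv u x j =
      (((Real.sqrt ((μ (cylinder A (child θinv x m))).toReal))⁻¹ : ℝ) : ℂ) •
        cylLp A μ (child θinv x m) := by
  have huℂ : ∀ j < alpha A x, ∀ j' < alpha A x, ∑ m ∈ Finset.range (alpha A x),
      ((u x m j : ℝ) : ℂ) * u x m j' = if j = j' then 1 else 0 := fun j hj j' hj' => by
    have := hu j hj j' hj'
    split_ifs at this ⊢ <;> exact_mod_cast this
  rw [← sum_smul_sum_smul_of_orthonormal_columns huℂ (fun m => (((Real.sqrt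
    ((μ (cylinder A (child θinv x m))).toReal))⁻¹ : ℝ) : ℂ) • cylLp A μ (child θinv x m)) hm]
  refine Finset.sum_congr rfl fun j _ => ?_
  simp only [haarLp, smul_smul, Complex.ofReal_mul, mul_comm]

end Haar

theorem indicator_cylinder_mem_span_haar_general
    (A : Matrix (Fin l) (Fin l) ℕ)
    (μ : Measure (SigmaA l A)) [IsProbabilityMeasure μ]
    (θinv : List (Fin l) → ℕ → Fin l)
    (hθ : ∀ (x : List (Fin l)) (hx : Admissible A x),
      Set.BijOn (θinv x) (Set.Iio (alpha A x)) {y : Fin l | A (x.getLast hx.1) y = 1})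
    (u : List (Fin l) → ℕ → ℕ → ℝ)
    (hu_orth : ∀ x, Admissible A x → ∀ j < alpha A x, ∀ j' < alpha A x,
      ∑ m ∈ Finset.range (alpha A x), u x m j * u x m j' = if j = j' then 1 else 0)
    (hu_last : ∀ x, Admissible A x → ∀ m < alpha A x,
      u x m (alpha A x - 1) =
        (Real.sqrt ((μ (cylinder A x)).toReal))⁻¹ *
          Real.sqrt ((μ (cylinder A (child θinv x m))).toReal)) :
    ∀ x : List (Fin l), Admissible A x →
      cylLp A μ x ∈ Submodule.span ℂ (haarSet A μ θinv u) := by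
  intro x
  induction x using List.reverseRecOn with
  | nil => exact fun hx => absurd rfl hx.1
  | append_singleton y b ih =>
    intro hx
    apply cylLp_mem_of_inv_sqrt_smul_mem
    rcases eq_or_ne y [] with rfl | hy
    · exact Submodule.subset_span (Or.inr ⟨b, rfl⟩)
    obtain ⟨hy_adm, hb⟩ := hx.of_append_singleton hy
    obtain ⟨m, hm, rfl⟩ := (hθ y hy_adm).surjOn hb
    rw [← child, ← sum_smul_haarLp (hu_orth y hy_adm) hm]
    refine Submodule.sum_mem _ fun j hj => Submodule.smul_mem _ _ ?_
    rcases Nat.lt_or_ge (j + 1) (alpha A y) with hlt | hge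
    · exact Submodule.subset_span (Or.inl ⟨y, j, hy_adm, hlt, rfl⟩)
    · obtain rfl : j = alpha A y - 1 := by have := Finset.mem_range.1 hj; omega
      rw [haarLp_last_eq hy_adm.1 (hθ y hy_adm) (hu_last y hy_adm)]
      exact Submodule.smul_mem _ _ (ih hy_adm)

/-- For every `x ∈ Σ_A^*`, the characteristic function `χ_{[x]}` is a finite
complex linear combination of elements of the Haar family `𝓗`. -/
theorem indicator_cylinder_mem_span_haar
    (hl : 2 ≤ l) (A : Matrix (Fin l) (Fin l) ℕ) (hA : Primitive A)
    (φ : SigmaA l A → ℝ) (hφ : HolderCont φ) (P : ℝ)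
    (μ : Measure (SigmaA l A)) [IsProbabilityMeasure μ] (hGibbs : IsGibbs φ P μ)
    (θinv : List (Fin l) → ℕ → Fin l)
    (hθ : ∀ (x : List (Fin l)) (hx : Admissible A x),
      Set.BijOn (θinv x) (Set.Iio (alpha A x)) {y : Fin l | A (x.getLast hx.1) y = 1})
    (u : List (Fin l) → ℕ → ℕ → ℝ)
    (hu_orth : ∀ x, Admissible A x → ∀ j < alpha A x, ∀ j' < alpha A x,
      ∑ m ∈ Finset.range (alpha A x), u x m j * u x m j' = if j = j' then 1 else 0)
    (hu_last : ∀ x, Admissible A x → ∀ m < alpha A x,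
      u x m (alpha A x - 1) =
        (Real.sqrt ((μ (cylinder A x)).toReal))⁻¹ *
          Real.sqrt ((μ (cylinder A (child θinv x m))).toReal)) :
    ∀ x : List (Fin l), Admissible A x →
      cylLp A μ x ∈ Submodule.span ℂ (haarSet A μ θinv u) :=
  indicator_cylinder_mem_span_haar_general A μ θinv hθ u hu_orth hu_last

end SFT
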